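/- arXiv:2106.15607 — 4 statements merged into one kernel-verified Lean document; each statement's English description precedes it below -/
import Mathlib

section
/- Let $m \in \mathbb{Z}^{+} \cup \{0\}$ and $k \in \mathbb{Z}^{+}$ with $k > 1$, and define the sequence $(a_l)_{l \geq 1}$ by $a_l = 1/n$ if $l = n^k - m$ for some positive integer $n$ with $n^k > m$, and $a_l = 0$ otherwise. Then $\sup_{N \in \mathbb{N}} \sum_{j=1}^{\infty} \Big( \sum_{n=jN}^{(j+1)N - 1} a_n \Big)^2 \geq \frac{1}{8k^2}$. -/
/-!
Take `M = 2k(m + 1)` and the block length `N = M ^ k - m`. Since `(1 + 1/(2k)) ^ k < √e < 7/4`,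
the block `[N, 2N)` contains the `m + 2` points `n ^ k - m` with `M ≤ n ≤ (2k + 1)(m + 1)`,
each of weight at least `1 / ((2k + 1)(m + 1))`. So that block alone sums to at least
`1 / (2k + 1)`, and `(2k + 1) ^ 2 ≤ 8k ^ 2` for `k ≥ 2`. The squared block sums are summable by
Cauchy–Schwarz, as `a ∈ ℓ²`, so the series dominates its first term.
-/

open Finset

def blockSum {M : Type*} [AddCommMonoid M] (a : ℕ → M) (N j : ℕ) : M :=
  ∑ n ∈ Ico (j * N) ((j + 1) * N), a n

theorem blockSum_eq_sum_range {M : Type*} [AddCommMonoid M] (a : ℕ → M) (N j : ℕ) :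
    blockSum a N j = ∑ i ∈ range N, a (j * N + i) := by
  rw [blockSum, sum_Ico_eq_sum_range, add_mul, one_mul, Nat.add_sub_cancel_left]

theorem summable_blockSum {E : Type*} [NormedAddCommGroup E] [CompleteSpace E] {a : ℕ → E}
    (ha : Summable a) (N : ℕ) : Summable (blockSum a N) := by
  simp only [funext (blockSum_eq_sum_range a N)]
  refine summable_sum fun i hi => ha.comp_injective fun j j' hjj' => ?_
  have hN : 0 < N := lt_of_le_of_lt (Nat.zero_le i) (mem_range.mp hi)
  exact Nat.eq_of_mul_eq_mul_right hN (Nat.add_right_cancel hjj')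

theorem summable_blockSum_sq {a : ℕ → ℝ} (ha : Summable fun n => a n ^ 2) (N : ℕ) :
    Summable fun j => blockSum a N j ^ 2 := by
  refine ((summable_blockSum ha N).mul_left (N : ℝ)).of_nonneg_of_le (fun j => sq_nonneg _)
    fun j => ?_
  have hcard : #(Ico (j * N) ((j + 1) * N)) = N := by
    rw [Nat.card_Ico, add_mul, one_mul, Nat.add_sub_cancel_left]
  simpa only [blockSum, hcard] using
    sq_sum_le_card_mul_sum_sq (s := Ico (j * N) ((j + 1) * N)) (f := a)

theorem four_mul_two_mul_add_one_pow_lt (k : ℕ) : 4 * (2 * k + 1) ^ k < 7 * (2 * k) ^ k := by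
  rcases Nat.eq_zero_or_pos k with rfl | hk
  · norm_num
  have hbase : (1 + ((2 * k : ℕ) : ℝ)⁻¹) = (2 * k + 1 : ℝ) / (2 * k) := by
    push_cast
    field_simp
  have hexp : (((2 * k + 1 : ℝ) / (2 * k)) ^ k) ^ 2 < 49 / 16 := by
    rw [← pow_mul', ← hbase]
    linarith [@Real.one_add_inv_pow_le_exp (2 * k), Real.exp_one_lt_d9]
  have hpos : (0 : ℝ) < (2 * k) ^ k := by positivity
  rw [div_pow, div_pow, div_lt_iff₀ (by positivity)] at hexp
  have : ((4 * (2 * k + 1) ^ k : ℕ) : ℝ) < ((7 * (2 * k) ^ k : ℕ) : ℝ) := by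
    push_cast
    nlinarith [pow_pos hpos 2]
  exact_mod_cast this

theorem four_mul_lt_two_mul_mul_add_one_pow {m k : ℕ} (hk : 2 ≤ k) :
    4 * m < (2 * k * (m + 1)) ^ k := calc
  4 * m < 2 * k * (m + 1) := by nlinarith
  _ ≤ (2 * k * (m + 1)) ^ k := Nat.le_self_pow (by omega) _

theorem pow_sub_mem_Ico {m k n : ℕ} (hk : 2 ≤ k)
    (hn : n ∈ Icc (2 * k * (m + 1)) ((2 * k + 1) * (m + 1))) :
    n ^ k - m ∈ Ico ((2 * k * (m + 1)) ^ k - m) (2 * ((2 * k * (m + 1)) ^ k - m)) := by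
  obtain ⟨hMn, hnM⟩ := mem_Icc.mp hn
  have hm := four_mul_lt_two_mul_mul_add_one_pow (m := m) hk
  have hlow : (2 * k * (m + 1)) ^ k ≤ n ^ k := Nat.pow_le_pow_left hMn k
  have hup : 4 * n ^ k < 7 * (2 * k * (m + 1)) ^ k := calc
    4 * n ^ k ≤ 4 * ((2 * k + 1) * (m + 1)) ^ k := by gcongr
    _ = 4 * (2 * k + 1) ^ k * (m + 1) ^ k := by rw [mul_pow, mul_assoc]
    _ < 7 * (2 * k) ^ k * (m + 1) ^ k :=
      Nat.mul_lt_mul_of_pos_right (four_mul_two_mul_add_one_pow_lt k) (by positivity)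
    _ = 7 * (2 * k * (m + 1)) ^ k := by rw [mul_pow _ (m + 1), mul_assoc]
  rw [mem_Ico]
  omega

def IsSparseHarmonic (m k : ℕ) (a : ℕ → ℝ) : Prop :=
  (∀ n : ℕ, 0 < n → m < n ^ k → a (n ^ k - m) = 1 / n) ∧
    ∀ l : ℕ, (¬ ∃ n : ℕ, 0 < n ∧ m < n ^ k ∧ l = n ^ k - m) → a l = 0

namespace IsSparseHarmonic

variable {m k : ℕ} {a : ℕ → ℝ}

theorem nonneg (ha : IsSparseHarmonic m k a) (l : ℕ) : 0 ≤ a l := by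
  by_cases hl : ∃ n : ℕ, 0 < n ∧ m < n ^ k ∧ l = n ^ k - m
  · obtain ⟨n, hn, hnm, rfl⟩ := hl
    rw [ha.1 n hn hnm]
    positivity
  · rw [ha.2 l hl]

/-- `n ↦ n ^ k - m` parametrises the support injectively and pulls `a ^ 2` back to `1 / n ^ 2`. -/
theorem summable_sq (ha : IsSparseHarmonic m k a) (hk : k ≠ 0) :
    Summable fun l => a l ^ 2 := by
  let S := {n : ℕ | 0 < n ∧ m < n ^ k}
  let g : S → ℕ := fun n => (n : ℕ) ^ k - m
  have hg : Function.Injective g := by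
    intro n n' h
    have hn := n.2.2
    have hn' := n'.2.2
    simp only [g] at h
    exact Subtype.ext (Nat.pow_left_injective hk (show n.1 ^ k = n'.1 ^ k by omega))
  have hsupp : ∀ l ∉ Set.range g, a l ^ 2 = 0 := by
    intro l hl
    rw [ha.2 l, sq, mul_zero]
    rintro ⟨n, hn, hnm, rfl⟩
    exact hl ⟨⟨n, hn, hnm⟩, rfl⟩
  rw [← hg.summable_iff hsupp]
  refine ((Real.summable_one_div_nat_pow.mpr one_lt_two).subtype S).congr fun n => ?_
  simp [g, ha.1 n.1 n.2.1 n.2.2]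

theorem inv_two_mul_add_one_le_blockSum (ha : IsSparseHarmonic m k a) (hk : 2 ≤ k) :
    1 / (2 * k + 1 : ℝ) ≤ blockSum a ((2 * k * (m + 1)) ^ k - m) 1 := by
  set s := Icc (2 * k * (m + 1)) ((2 * k + 1) * (m + 1))
  have hm := four_mul_lt_two_mul_mul_add_one_pow (m := m) hk
  have hlt : ∀ n ∈ s, 0 < n ∧ m < n ^ k := fun n hn =>
    ⟨lt_of_lt_of_le (by positivity) (mem_Icc.mp hn).1,
      by have := Nat.pow_le_pow_left (mem_Icc.mp hn).1 k; omega⟩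
  have hinj : Set.InjOn (fun n => n ^ k - m) s := fun x hx y hy hxy => by
    have := (hlt x hx).2
    have := (hlt y hy).2
    exact Nat.pow_left_injective (by omega) (show x ^ k = y ^ k by simp only at hxy; omega)
  have hval : ∀ n ∈ s, 1 / ((2 * k + 1) * (m + 1) : ℝ) ≤ a (n ^ k - m) := fun n hn => by
    rw [ha.1 n (hlt n hn).1 (hlt n hn).2]
    gcongr
    · exact_mod_cast (hlt n hn).1
    · exact_mod_cast (mem_Icc.mp hn).2
  have hsub : s.image (fun n => n ^ k - m) ⊆ Ico (1 * ((2 * k * (m + 1)) ^ k - m))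
      ((1 + 1) * ((2 * k * (m + 1)) ^ k - m)) := by
    rw [one_mul, one_add_one_eq_two]
    exact image_subset_iff.mpr fun n hn => pow_sub_mem_Ico hk hn
  calc 1 / (2 * k + 1 : ℝ) ≤ #s • (1 / ((2 * k + 1) * (m + 1) : ℝ)) := by
        have hcard : (2 * k + 1) * (m + 1) + 1 - 2 * k * (m + 1) = m + 2 := by
          rw [add_mul, one_mul]
          omega
        rw [Nat.card_Icc, hcard, nsmul_eq_mul, mul_one_div,
          div_le_div_iff₀ (by positivity) (by positivity)]
        push_cast
        nlinarith
    _ ≤ ∑ n ∈ s, a (n ^ k - m) := card_nsmul_le_sum _ _ _ hval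
    _ = ∑ l ∈ s.image (fun n => n ^ k - m), a l := (sum_image hinj).symm
    _ ≤ blockSum a ((2 * k * (m + 1)) ^ k - m) 1 :=
      sum_le_sum_of_subset_of_nonneg hsub fun l _ _ => ha.nonneg l

end IsSparseHarmonic

/-- For `m ≥ 0`, `k > 1` and the sequence `a_l = 1/n` when `l = n^k - m` (with `n ≥ 1`,
`n^k > m`) and `a_l = 0` otherwise, one has
`sup_N ∑_{j=1}^∞ (∑_{n=jN}^{(j+1)N-1} a_n)^2 ≥ 1/(8k^2)`. -/
theorem block_sums_lower_bound (m k : ℕ) (hk : 1 < k) (a : ℕ → ℝ)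
    (ha : ∀ n : ℕ, 0 < n → m < n ^ k → a (n ^ k - m) = 1 / n)
    (ha0 : ∀ l : ℕ, (¬ ∃ n : ℕ, 0 < n ∧ m < n ^ k ∧ l = n ^ k - m) → a l = 0) :
    ∀ c : ℝ, c < 1 / (8 * (k : ℝ) ^ 2) →
      ∃ N : ℕ, 0 < N ∧
        c < ∑' j : ℕ, (∑ n ∈ Finset.Ico ((j + 1) * N) ((j + 2) * N), a n) ^ 2 := by
  intro c hc
  have hseq : IsSparseHarmonic m k a := ⟨ha, ha0⟩
  set N := (2 * k * (m + 1)) ^ k - m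
  have hN : 0 < N := by
    have := four_mul_lt_two_mul_mul_add_one_pow (m := m) hk
    omega
  have hsum : Summable fun j => blockSum a N (j + 1) ^ 2 :=
    (summable_nat_add_iff (f := fun j => blockSum a N j ^ 2) 1).mpr
      (summable_blockSum_sq (hseq.summable_sq (by omega)) N)
  have hkR : (2 : ℝ) ≤ k := by exact_mod_cast hk
  refine ⟨N, hN, hc.trans_le ?_⟩
  calc 1 / (8 * (k : ℝ) ^ 2) ≤ (1 / (2 * k + 1)) ^ 2 := by
        rw [div_pow, one_pow]
        gcongr
        nlinarith
    _ ≤ blockSum a N 1 ^ 2 := by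
        gcongr
        exact hseq.inv_two_mul_add_one_le_blockSum hk
    _ ≤ ∑' j, blockSum a N (j + 1) ^ 2 := hsum.le_tsum 0 fun j _ => sq_nonneg _
end

section
/- Let $k \in \mathbb{N}$ with $k \geq 1$, and let $a, q$ be coprime positive integers. Then the partial sums $\sum_{n=1}^{N} \frac{e(n^k a/q)}{n}$ converge as $N \to \infty$ if and only if $\sum_{n=1}^{q} e\big(\frac{a}{q} n^k\big) = 0$. -/
/-!
The summand `n ↦ e(n^k a / q)` is `q`-periodic, and for a `q`-periodic `f` the series
`∑ f n / n` converges iff the period sum `S = ∑_{n=1}^q f n` vanishes. If `S = 0`, the partial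
sums of `f` are themselves periodic, hence bounded, and Dirichlet's test applies. If `S ≠ 0`,
then `f - S/q` has period sum zero, so its series converges, and what is left over is `S/q`
times the divergent harmonic series.
-/

open Filter

/-- `e t = exp(2πit)`. -/
noncomputable def e (t : ℝ) : ℂ := Complex.exp (2 * Real.pi * Complex.I * t)

open Finset Function Topology

lemma e_add_intCast (t : ℝ) (m : ℤ) : e (t + m) = e t := by
  simpa only [e, Complex.ofReal_add, Complex.ofReal_intCast, mul_add, mul_comm (m : ℂ)] using
    Complex.exp_periodic.int_mul m (2 * Real.pi * Complex.I * t)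

lemma periodic_e_pow_mul_div (k : ℕ) (a : ℤ) (q : ℕ) :
    Periodic (fun n : ℕ => e ((n : ℝ) ^ k * (a / q))) q := by
  obtain rfl | hq := eq_or_ne q 0
  · simp
  intro n
  obtain ⟨c, hc⟩ : (q : ℤ) ∣ ((n + q : ℕ) : ℤ) ^ k - (n : ℤ) ^ k := by
    simpa using sub_dvd_pow_sub_pow ((n + q : ℕ) : ℤ) n k
  have hc' : ((n + q : ℕ) : ℝ) ^ k = (n : ℝ) ^ k + q * c := by
    rw [← sub_eq_iff_eq_add']; exact_mod_cast hc
  have harg : ((n + q : ℕ) : ℝ) ^ k * (a / q) = (n : ℝ) ^ k * (a / q) + ((c * a : ℤ) : ℝ) := by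
    rw [hc']; push_cast; field_simp
  simp only [harg, e_add_intCast]

lemma sum_Icc_one_eq_sum_range {M : Type*} [AddCommMonoid M] (f : ℕ → M) (N : ℕ) :
    ∑ n ∈ Icc 1 N, f n = ∑ i ∈ range N, f (i + 1) := by
  rw [range_eq_Ico, sum_Ico_add', zero_add, Ico_add_one_right_eq_Icc]

lemma not_tendsto_sum_Icc_inv_natCast {𝕜 : Type*} [RCLike 𝕜] (L : 𝕜) :
    ¬Tendsto (fun N : ℕ => ∑ n ∈ Icc 1 N, (n : 𝕜)⁻¹) atTop (𝓝 L) := by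
  intro h
  have hharm : Tendsto (fun N : ℕ => ∑ n ∈ Icc 1 N, (n : ℝ)⁻¹) atTop atTop := by
    simpa [sum_Icc_one_eq_sum_range, one_div] using Real.tendsto_sum_range_one_div_nat_succ_atTop
  refine not_tendsto_atTop_of_tendsto_nhds h.norm (hharm.congr fun N => ?_)
  have hcast : ∑ n ∈ Icc 1 N, (n : 𝕜)⁻¹ = ((∑ n ∈ Icc 1 N, (n : ℝ)⁻¹ : ℝ) : 𝕜) := by
    push_cast; rfl
  rw [hcast, RCLike.norm_ofReal, abs_of_nonneg (sum_nonneg fun n _ => by positivity)]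

namespace Function.Periodic

section AddCancelCommMonoid

variable {M : Type*} [AddCancelCommMonoid M] {f : ℕ → M} {q : ℕ}

lemma sum_range_const_add (hf : Periodic f q) (n : ℕ) :
    ∑ i ∈ range q, f (n + i) = ∑ i ∈ range q, f i := by
  induction n with
  | zero => simp
  | succ n ih =>
    rw [← ih]
    refine add_right_cancel (b := f n) ?_
    have := sum_range_succ' (fun i => f (n + i)) q
    rw [sum_range_succ, hf n, add_zero] at this
    simpa [add_right_comm n, add_assoc] using this.symm

lemma periodic_sum_range (hf : Periodic f q) (h0 : ∑ i ∈ range q, f i = 0) :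
    Periodic (fun n => ∑ i ∈ range n, f i) q := fun n => by
  simp only [sum_range_add, hf.sum_range_const_add, h0, add_zero]

end AddCancelCommMonoid

lemma norm_sum_range_le {E : Type*} [SeminormedAddCommGroup E] {f : ℕ → E} {q : ℕ}
    (hf : Periodic f q) (hq : 0 < q) (h0 : ∑ i ∈ range q, f i = 0) (n : ℕ) :
    ‖∑ i ∈ range n, f i‖ ≤ ∑ i ∈ range q, ‖f i‖ := by
  rw [← (hf.periodic_sum_range h0).map_mod_nat n]
  calc ‖∑ i ∈ range (n % q), f i‖ ≤ ∑ i ∈ range (n % q), ‖f i‖ := norm_sum_le _ _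
    _ ≤ ∑ i ∈ range q, ‖f i‖ :=
      sum_le_sum_of_subset_of_nonneg (range_mono (Nat.mod_lt n hq).le)
        fun _ _ _ => norm_nonneg _

variable {𝕜 : Type*} [RCLike 𝕜] {f : ℕ → 𝕜} {q : ℕ}

lemma cauchySeq_sum_Icc_div (hf : Periodic f q) (hq : 0 < q) (h0 : ∑ n ∈ Icc 1 q, f n = 0) :
    CauchySeq fun N : ℕ => ∑ n ∈ Icc 1 N, f n / n := by
  rw [sum_Icc_one_eq_sum_range] at h0
  have hanti : Antitone fun i : ℕ => ((i : ℝ) + 1)⁻¹ := fun m n hmn =>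
    inv_anti₀ (by positivity) (by gcongr)
  have hzero : Tendsto (fun i : ℕ => ((i : ℝ) + 1)⁻¹) atTop (𝓝 0) :=
    tendsto_one_div_add_atTop_nhds_zero_nat.congr fun _ => one_div _
  convert hanti.cauchySeq_series_mul_of_tendsto_zero_of_bounded hzero
    ((hf.add_const 1).norm_sum_range_le hq h0) using 2 with N
  rw [sum_Icc_one_eq_sum_range]
  refine sum_congr rfl fun i _ => ?_
  rw [RCLike.real_smul_eq_coe_mul, div_eq_inv_mul]
  push_cast
  rfl

lemma sum_Icc_eq_zero_of_tendsto (hf : Periodic f q) (hq : 0 < q) {L : 𝕜}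
    (hL : Tendsto (fun N : ℕ => ∑ n ∈ Icc 1 N, f n / n) atTop (𝓝 L)) :
    ∑ n ∈ Icc 1 q, f n = 0 := by
  set c := (∑ n ∈ Icc 1 q, f n) / q
  have hg : Periodic (fun n => f n - c) q := fun n => by simp only [hf n]
  have hg0 : ∑ n ∈ Icc 1 q, (f n - c) = 0 := by
    rw [sum_sub_distrib, sum_const, Nat.card_Icc, add_tsub_cancel_right, nsmul_eq_mul,
      mul_div_cancel₀ _ (Nat.cast_ne_zero.mpr hq.ne'), sub_self]
  obtain ⟨L', hL'⟩ := cauchySeq_tendsto_of_complete (hg.cauchySeq_sum_Icc_div hq hg0)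
  have hc : Tendsto (fun N : ℕ => c * ∑ n ∈ Icc 1 N, (n : 𝕜)⁻¹) atTop (𝓝 (L - L')) :=
    (hL.sub hL').congr fun N => by
      rw [mul_sum, ← sum_sub_distrib]
      exact sum_congr rfl fun n _ => by ring
  by_contra hS
  have hc0 : c ≠ 0 := div_ne_zero hS (Nat.cast_ne_zero.mpr hq.ne')
  exact not_tendsto_sum_Icc_inv_natCast _
    ((hc.const_mul c⁻¹).congr fun N => inv_mul_cancel_left₀ hc0 _)

theorem tendsto_sum_Icc_div_iff (hf : Periodic f q) (hq : 0 < q) :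
    (∃ L, Tendsto (fun N : ℕ => ∑ n ∈ Icc 1 N, f n / n) atTop (𝓝 L)) ↔ ∑ n ∈ Icc 1 q, f n = 0 :=
  ⟨fun ⟨_, hL⟩ => hf.sum_Icc_eq_zero_of_tendsto hq hL,
    fun h0 => cauchySeq_tendsto_of_complete (hf.cauchySeq_sum_Icc_div hq h0)⟩

end Function.Periodic

theorem rational_point_convergence_criterion_general (k : ℕ)
    (a q : ℕ) (hq : 0 < q) :
    (∃ L : ℂ, Tendsto
        (fun N : ℕ => ∑ n ∈ Finset.Icc 1 N, e ((n : ℝ) ^ k * ((a : ℝ) / (q : ℝ))) / n)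
        atTop (nhds L)) ↔
    ∑ n ∈ Finset.Icc 1 q, e ((a : ℝ) / q * (n : ℝ) ^ k) = 0 := by
  have hf : Periodic (fun n : ℕ => e ((n : ℝ) ^ k * ((a : ℝ) / (q : ℝ)))) q := by
    simpa only [Int.cast_natCast] using periodic_e_pow_mul_div k a q
  rw [hf.tendsto_sum_Icc_div_iff hq]
  simp only [mul_comm ((a : ℝ) / q)]

/-- For `k ≥ 1` and coprime positive integers `a, q`, the series `∑ e(n^k a/q)/n`
converges iff the complete sum `∑_{n=1}^q e(a n^k/q)` vanishes. -/
theorem rational_point_convergence_criterion (k : ℕ) (hk : 1 ≤ k)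
    (a q : ℕ) (ha : 0 < a) (hq : 0 < q) (hcop : Nat.Coprime a q) :
    (∃ L : ℂ, Tendsto
        (fun N : ℕ => ∑ n ∈ Finset.Icc 1 N, e ((n : ℝ) ^ k * ((a : ℝ) / (q : ℝ))) / n)
        atTop (nhds L)) ↔
    ∑ n ∈ Finset.Icc 1 q, e ((a : ℝ) / q * (n : ℝ) ^ k) = 0 :=
  rational_point_convergence_criterion_general k a q hq
end

section
/- Let $p$ be a prime, $k \in \mathbb{N}$ with $k \geq 2$, and $a \in \mathbb{Z}$ with $\gcd(a, p) = 1$ and $\gcd(k, p) = 1$. Then $\sum_{n=1}^{p^k} e\big( \frac{a}{p^k} n^k \big) = p^{k-1}$. In particular, since this complete sum is nonzero, the series $\sum_{n=1}^{\infty} e(n^k x)/n$ diverges at the point $x = a/p^k$. -/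
/-!
Write `q = p ^ k` and `n = p ^ (k - 1) * t + m` with `t < p` and `m < p ^ (k - 1)`.
As `k ≥ 2`, `(p ^ (k - 1) * t) ^ 2 ≡ 0 (mod q)`, hence
`a n ^ k ≡ a m ^ k + a k m ^ (k - 1) p ^ (k - 1) t`, and the sum over `t` is a complete sum of
the character `t ↦ e(a k m ^ (k - 1) t / p)`: it is `p` if `p ∣ m` and `0` otherwise, because
`p ∤ a k`. The `p ^ (k - 2)` multiples of `p` below `p ^ (k - 1)` then contribute `p` each.

For the divergence, the phases `c n = e(a n ^ k / q)` are `q`-periodic with nonzero mean `μ`, so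
`c - μ` has bounded partial sums and `∑ (c n - μ) / n` converges by Dirichlet's test, whereas
`∑ μ / n` diverges.
-/

open Filter

open Finset Function Topology

section Sums

variable {M : Type*}

lemma sum_range_mul_eq_sum_sum [AddCommMonoid M] (f : ℕ → M) (m n : ℕ) :
    ∑ i ∈ range (m * n), f i = ∑ i ∈ range m, ∑ j ∈ range n, f (n * i + j) := by
  induction m with
  | zero => simp
  | succ m ih => rw [Nat.succ_mul, sum_range_add, ih, sum_range_succ, mul_comm]

lemma sum_range_mul_ite_dvd [AddCommMonoid M] (c : M) (n : ℕ) {p : ℕ} (hp : 0 < p) :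
    ∑ j ∈ range (n * p), (if p ∣ j then c else 0) = n • c := by
  have hinner (u : ℕ) : ∑ r ∈ range p, (if p ∣ p * u + r then c else 0) = c := by
    have hdvd : ∀ r ∈ range p, (p ∣ p * u + r ↔ r = 0) := fun r hr ↦ by
      rw [Nat.dvd_add_right (dvd_mul_right p u)]
      exact ⟨fun h ↦ Nat.eq_zero_of_dvd_of_lt h (mem_range.1 hr), fun h ↦ h ▸ dvd_zero p⟩
    rw [sum_congr rfl fun r hr ↦ if_congr (hdvd r hr) rfl rfl, sum_ite_eq' (range p) 0,
      if_pos (mem_range.2 hp)]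
  rw [sum_range_mul_eq_sum_sum, sum_congr rfl fun u _ ↦ hinner u, sum_const, card_range]

lemma sum_Icc_one_eq_sum_range_succ [AddCommMonoid M] (f : ℕ → M) (N : ℕ) :
    ∑ n ∈ Icc 1 N, f n = ∑ i ∈ range N, f (i + 1) := by
  rw [range_eq_Ico, sum_Ico_add', ← Ico_add_one_right_eq_Icc, zero_add]

variable [AddCancelCommMonoid M] {f : ℕ → M} {q : ℕ}

lemma Function.Periodic.sum_range_add_eq_sum_range (hf : Periodic f q) (n : ℕ) :
    ∑ i ∈ range q, f (n + i) = ∑ i ∈ range q, f i := by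
  induction n with
  | zero => simp
  | succ n ih =>
    have h := sum_range_succ' (fun i ↦ f (n + i)) q
    rw [sum_range_succ, ih, add_zero, ← hf n] at h
    simpa only [add_assoc, add_comm 1] using (add_right_cancel h).symm

lemma Function.Periodic.sum_Icc_one_eq_sum_range (hf : Periodic f q) :
    ∑ n ∈ Icc 1 q, f n = ∑ n ∈ range q, f n := by
  rw [sum_Icc_one_eq_sum_range_succ]
  simpa only [add_comm] using hf.sum_range_add_eq_sum_range 1

end Sums

section Divergence

variable {E : Type*} [NormedAddCommGroup E]

lemma Function.Periodic.exists_bound_norm_sum_range {d : ℕ → E} {q : ℕ} (hd : Periodic d q)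
    (hq : 0 < q) (hsum : ∑ i ∈ range q, d i = 0) :
    ∃ B, ∀ N, ‖∑ i ∈ range N, d i‖ ≤ B := by
  have hD : Periodic (fun N ↦ ∑ i ∈ range N, d i) q := fun N ↦ by
    dsimp only
    rw [Finset.sum_range_add, hd.sum_range_add_eq_sum_range, hsum, add_zero]
  refine ⟨∑ n ∈ range q, ‖∑ i ∈ range n, d i‖, fun N ↦ ?_⟩
  rw [← hD.map_mod_nat N]
  exact single_le_sum (f := fun n ↦ ‖∑ i ∈ range n, d i‖) (fun _ _ ↦ norm_nonneg _)
    (mem_range.2 (N.mod_lt hq))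

variable [NormedSpace ℝ E]

lemma not_tendsto_harmonic_smul {v : E} (hv : v ≠ 0) (L : E) :
    ¬ Tendsto (fun N ↦ (∑ i ∈ range N, 1 / ((i : ℝ) + 1)) • v) atTop (𝓝 L) := by
  intro h
  refine not_tendsto_nhds_of_tendsto_atTop ?_ ‖L‖ h.norm
  refine (Real.tendsto_sum_range_one_div_nat_succ_atTop.atTop_mul_const
    (norm_pos_iff.2 hv)).congr fun N ↦ ?_
  rw [norm_smul, Real.norm_of_nonneg (sum_nonneg fun i _ ↦ by positivity)]

variable [CompleteSpace E]

theorem Function.Periodic.not_tendsto_sum_range_one_div_succ_smul {z : ℕ → E} {q : ℕ}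
    (hz : Periodic z q) (hq : 0 < q) (hsum : ∑ i ∈ range q, z i ≠ 0) (L : E) :
    ¬ Tendsto (fun N ↦ ∑ i ∈ range N, (1 / ((i : ℝ) + 1)) • z i) atTop (𝓝 L) := by
  set μ : E := (q : ℝ)⁻¹ • ∑ i ∈ range q, z i
  have hμ : μ ≠ 0 := smul_ne_zero (by positivity) hsum
  have hd : Periodic (fun i ↦ z i - μ) q := fun i ↦ by simp only [hz i]
  have hdsum : ∑ i ∈ range q, (z i - μ) = 0 := by
    rw [sum_sub_distrib, sum_const, card_range, ← Nat.cast_smul_eq_nsmul ℝ,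
      smul_inv_smul₀ (by positivity), sub_self]
  obtain ⟨B, hB⟩ := hd.exists_bound_norm_sum_range hq hdsum
  have hanti : Antitone fun i : ℕ ↦ 1 / ((i : ℝ) + 1) := fun i j hij ↦ by
    dsimp only
    gcongr
  obtain ⟨L', hL'⟩ := cauchySeq_tendsto_of_complete
    (hanti.cauchySeq_series_mul_of_tendsto_zero_of_bounded
      tendsto_one_div_add_atTop_nhds_zero_nat hB)
  intro hL
  refine not_tendsto_harmonic_smul hμ (L - L') ((hL.sub hL').congr fun N ↦ ?_)
  rw [← sum_sub_distrib, sum_smul]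
  simp only [smul_sub, sub_sub_cancel]

theorem Function.Periodic.not_tendsto_sum_Icc_div {c : ℕ → ℂ} {q : ℕ} (hc : Periodic c q)
    (hq : 0 < q) (hsum : ∑ n ∈ Icc 1 q, c n ≠ 0) (L : ℂ) :
    ¬ Tendsto (fun N ↦ ∑ n ∈ Icc 1 N, c n / n) atTop (𝓝 L) := by
  rw [sum_Icc_one_eq_sum_range_succ] at hsum
  refine fun h ↦ (hc.add_const 1).not_tendsto_sum_range_one_div_succ_smul hq hsum L
    (h.congr fun N ↦ ?_)
  rw [sum_Icc_one_eq_sum_range_succ]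
  refine sum_congr rfl fun i _ ↦ ?_
  rw [Complex.real_smul]
  push_cast
  ring

end Divergence

section GaussSum

lemma add_pow_eq_of_sq_eq_zero {R : Type*} [CommRing R] {y : R} (hy : y ^ 2 = 0) (x : R)
    (n : ℕ) : (x + y) ^ n = x ^ n + n * x ^ (n - 1) * y := by
  have h := sq_dvd_add_pow_sub_sub y x n
  rw [hy, zero_dvd_iff, sub_sub, sub_eq_zero] at h
  rw [h]
  ring

lemma Nat.Prime.intCast_dvd_mul_mul_pow_iff {p : ℕ} (hp : p.Prime) {a : ℤ} {k m j : ℕ}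
    (hap : ¬ (p : ℤ) ∣ a) (hkp : ¬ p ∣ k) (hj : j ≠ 0) :
    (p : ℤ) ∣ a * k * m ^ j ↔ p ∣ m := by
  have hpZ : _root_.Prime (p : ℤ) := Nat.prime_iff_prime_int.mp hp
  refine ⟨fun h ↦ ?_, fun h ↦ (dvd_pow (Int.natCast_dvd_natCast.2 h) hj).mul_left _⟩
  rcases hpZ.dvd_mul.1 h with h | h
  · rcases hpZ.dvd_mul.1 h with h | h
    · exact absurd h hap
    · exact absurd (Int.natCast_dvd_natCast.1 h) hkp
  · exact Int.natCast_dvd_natCast.1 (hpZ.dvd_of_dvd_pow h)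

lemma ZMod.stdAddChar_natCast_mul_eq_one_iff {N m d : ℕ} [NeZero N] (hN : N = m * d) (b : ℤ) :
    ZMod.stdAddChar ((m : ZMod N) * (b : ZMod N)) = 1 ↔ (d : ℤ) ∣ b := by
  have hm : (m : ℤ) ≠ 0 := by
    have := NeZero.ne N
    rw [hN] at this
    exact_mod_cast left_ne_zero_of_mul this
  rw [← AddChar.map_zero_eq_one (ZMod.stdAddChar (N := N)),
    (ZMod.injective_stdAddChar (N := N)).eq_iff, ← Int.cast_natCast, ← Int.cast_mul,
    ZMod.intCast_zmod_eq_zero_iff_dvd, hN, Nat.cast_mul, mul_dvd_mul_iff_left hm]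

lemma e_div_pow_mul_pow (a : ℤ) (p k n : ℕ) [NeZero p] :
    e (a / (p : ℝ) ^ k * (n : ℝ) ^ k)
      = ZMod.stdAddChar ((a : ZMod (p ^ k)) * (n : ZMod (p ^ k)) ^ k) := by
  have := ZMod.stdAddChar_coe (N := p ^ k) (a * n ^ k)
  push_cast at this
  rw [this, e]
  push_cast
  ring_nf

lemma periodic_e_div_pow_mul_pow (a : ℤ) (p k : ℕ) [NeZero p] :
    Periodic (fun n : ℕ ↦ e (a / (p : ℝ) ^ k * (n : ℝ) ^ k)) (p ^ k) := fun n ↦ by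
  show e _ = e _
  rw [e_div_pow_mul_pow, e_div_pow_mul_pow, Nat.cast_add, ZMod.natCast_self, add_zero]

variable {p k : ℕ} [NeZero p] {a : ℤ}

lemma sum_range_stdAddChar_mul_pow_add (hp : p.Prime) (hk : 2 ≤ k) (hap : ¬ (p : ℤ) ∣ a)
    (hkp : ¬ p ∣ k) (m : ℕ) :
    ∑ t ∈ range p,
        ZMod.stdAddChar ((a : ZMod (p ^ k)) * ((p ^ (k - 1) * t + m : ℕ) : ZMod (p ^ k)) ^ k)
      = if p ∣ m then (p : ℂ) else 0 := by
  set ψ := ZMod.stdAddChar (N := p ^ k)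
  have hpk : p ^ k = p ^ (k - 1) * p := (pow_sub_one_mul (by omega) p).symm
  have hsq (t : ℕ) : ((p ^ (k - 1) * t : ℕ) : ZMod (p ^ k)) ^ 2 = 0 := by
    rw [← Nat.cast_pow, ZMod.natCast_eq_zero_iff, mul_pow, ← pow_mul]
    exact (pow_dvd_pow p (by omega)).mul_right _
  set ζ := ψ (((p ^ (k - 1) : ℕ) : ZMod (p ^ k)) * ((a * k * m ^ (k - 1) : ℤ) : ZMod (p ^ k)))
  have hterm (t : ℕ) : ψ ((a : ZMod (p ^ k)) * ((p ^ (k - 1) * t + m : ℕ) : ZMod (p ^ k)) ^ k)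
      = ψ ((a : ZMod (p ^ k)) * (m : ZMod (p ^ k)) ^ k) * ζ ^ t := by
    rw [Nat.cast_add, add_comm, add_pow_eq_of_sq_eq_zero (hsq t), ← AddChar.map_nsmul_eq_pow,
      ← AddChar.map_add_eq_mul, nsmul_eq_mul]
    congr 1
    push_cast
    ring
  have hζp : ζ ^ p = 1 := by
    rw [← AddChar.map_nsmul_eq_pow, nsmul_eq_mul, ← mul_assoc, ← Nat.cast_mul, mul_comm p,
      ← hpk, ZMod.natCast_self, zero_mul, AddChar.map_zero_eq_one]
  have hζ : ζ = 1 ↔ p ∣ m := by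
    rw [ZMod.stdAddChar_natCast_mul_eq_one_iff hpk,
      hp.intCast_dvd_mul_mul_pow_iff hap hkp (by omega)]
  rw [sum_congr rfl fun t _ ↦ hterm t, ← mul_sum]
  split_ifs with hm
  · obtain ⟨s, rfl⟩ := hm
    have hmk : ((p * s : ℕ) : ZMod (p ^ k)) ^ k = 0 := by
      rw [← Nat.cast_pow, mul_pow, Nat.cast_mul, ZMod.natCast_self, zero_mul]
    rw [hmk, mul_zero, AddChar.map_zero_eq_one, one_mul, hζ.2 (dvd_mul_right p s)]
    simp
  · rw [geom_sum_eq (mt hζ.1 hm), hζp, sub_self, zero_div, mul_zero]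

theorem sum_range_stdAddChar_mul_pow (hp : p.Prime) (hk : 2 ≤ k) (hap : ¬ (p : ℤ) ∣ a)
    (hkp : ¬ p ∣ k) :
    ∑ n ∈ range (p ^ k), ZMod.stdAddChar ((a : ZMod (p ^ k)) * (n : ZMod (p ^ k)) ^ k)
      = (p : ℂ) ^ (k - 1) := by
  have hrange : range (p ^ k) = range (p * p ^ (k - 1)) := by
    rw [← pow_succ', Nat.sub_add_cancel (by omega)]
  have hQ : p ^ (k - 1) = p ^ (k - 2) * p := by
    rw [← pow_succ, show k - 2 + 1 = k - 1 by omega]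
  rw [hrange, sum_range_mul_eq_sum_sum, sum_comm,
    sum_congr rfl fun m _ ↦ sum_range_stdAddChar_mul_pow_add hp hk hap hkp m, hQ,
    sum_range_mul_ite_dvd _ _ hp.pos, nsmul_eq_mul, Nat.cast_pow, ← pow_succ]
  congr 1
  omega

theorem sum_Icc_e_div_pow_mul_pow (hp : p.Prime) (hk : 2 ≤ k) (hap : ¬ (p : ℤ) ∣ a)
    (hkp : ¬ p ∣ k) :
    ∑ n ∈ Icc 1 (p ^ k), e (a / (p : ℝ) ^ k * (n : ℝ) ^ k) = (p : ℂ) ^ (k - 1) := by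
  rw [(periodic_e_div_pow_mul_pow a p k).sum_Icc_one_eq_sum_range,
    ← sum_range_stdAddChar_mul_pow hp hk hap hkp]
  exact sum_congr rfl fun n _ ↦ e_div_pow_mul_pow a p k n

end GaussSum

/-- For a prime `p`, `k ≥ 2` and `a` coprime to `p` with `gcd(k,p)=1`, the complete sum
`∑_{n=1}^{p^k} e(a n^k / p^k)` equals `p^{k-1}`; in particular the series
`∑ e(n^k x)/n` diverges at `x = a/p^k`. -/
theorem gauss_sum_at_prime_power_and_divergence (p : ℕ) (hp : p.Prime)
    (k : ℕ) (hk : 2 ≤ k) (a : ℤ) (hap : Int.gcd a p = 1) (hkp : Nat.Coprime k p) :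
    (∑ n ∈ Finset.Icc 1 (p ^ k), e ((a : ℝ) / (p : ℝ) ^ k * (n : ℝ) ^ k)
        = (p : ℂ) ^ (k - 1)) ∧
    ¬ ∃ L : ℂ, Tendsto
        (fun N : ℕ => ∑ n ∈ Finset.Icc 1 N,
          e ((n : ℝ) ^ k * ((a : ℝ) / (p : ℝ) ^ k)) / n)
        atTop (nhds L) := by
  have : NeZero p := ⟨hp.ne_zero⟩
  have hap' : ¬ (p : ℤ) ∣ a := by
    rw [Int.natCast_dvd]
    exact (hp.coprime_iff_not_dvd).1 (Nat.Coprime.symm hap)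
  have hkp' : ¬ p ∣ k := (hp.coprime_iff_not_dvd).1 hkp.symm
  have hG := sum_Icc_e_div_pow_mul_pow hp hk hap' hkp'
  refine ⟨hG, fun ⟨L, hL⟩ ↦ (periodic_e_div_pow_mul_pow a p k).not_tendsto_sum_Icc_div
    (pow_pos hp.pos k) ?_ L ?_⟩
  · rw [hG]
    exact pow_ne_zero _ (Nat.cast_ne_zero.2 hp.ne_zero)
  · simpa only [mul_comm ((_ : ℝ) ^ k)] using hL
end

section
/- Let $k \in \mathbb{N}$ with $k \geq 2$. There exists a constant $C = C(k)$ such that for every real $\beta \neq 0$ and all integers $m, N$ with $1 \leq m \leq N \leq |\beta|^{-1/k}$, one has $\Big| \sum_{n=m}^{N} \frac{1}{n(n+1)} \sum_{l=1}^{n} e(l^k \beta) \; - \; \int_{m}^{N} \frac{e(y^k \beta)}{y}\, dy \Big| \leq C$. -/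
/-!
Since `|e t - 1| ≤ 2π|t|` and `N^k |β| ≤ 1`, all phases `l^k β` (`l ≤ N`) and `y^k β`
(`y ≤ N`) are so small that replacing `e(·)` by `1` costs at most `2π N^{k-1} |β|` per summand,
resp. per unit length of the integral, hence at most `2π N^k |β| ≤ 2π` over a range of length
`N`. What remains is `∑_{n=m}^N 1/(n+1)` against `∫_m^N dy/y = log N - log m`, and these differ
by at most `2` by the harmonic bounds `log (n+1) ≤ H_n ≤ 1 + log n`.
-/

open Real Finset

lemma norm_e_sub_one_le (t : ℝ) : ‖e t - 1‖ ≤ 2 * π * |t| := by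
  have h : e t = Complex.exp (Complex.I * ((2 * π * t : ℝ) : ℂ)) := by
    rw [e]; push_cast; ring_nf
  rw [h]
  calc ‖Complex.exp (Complex.I * ((2 * π * t : ℝ) : ℂ)) - 1‖ ≤ ‖2 * π * t‖ :=
        norm_exp_I_mul_ofReal_sub_one_le
    _ = 2 * π * |t| := by rw [Real.norm_eq_abs, abs_mul, abs_of_pos two_pi_pos]

lemma pow_div_self_le_pow_div_self {k : ℕ} (hk : 1 ≤ k) {x y : ℝ} (hx : 0 < x) (hxy : x ≤ y) :
    x ^ k / x ≤ y ^ k / y := by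
  obtain ⟨j, rfl⟩ := Nat.exists_eq_add_of_le' hk
  rw [pow_succ, pow_succ, mul_div_cancel_right₀ _ hx.ne',
    mul_div_cancel_right₀ _ (hx.trans_le hxy).ne']
  gcongr

lemma norm_div_mul_succ_mul_sum_sub_inv_succ_le {n : ℕ} (hn : n ≠ 0) (z : ℕ → ℂ) {ε : ℝ}
    (hz : ∀ l ∈ Icc 1 n, ‖z l - 1‖ ≤ ε) :
    ‖1 / ((n : ℂ) * (n + 1)) * ∑ l ∈ Icc 1 n, z l - 1 / (n + 1)‖ ≤ ε / (n + 1) := by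
  have hsum : 1 / ((n : ℂ) * (n + 1)) * ∑ l ∈ Icc 1 n, z l - 1 / (n + 1)
      = ((1 / ((n : ℝ) * (n + 1)) : ℝ) : ℂ) * ∑ l ∈ Icc 1 n, (z l - 1) := by
    rw [sum_sub_distrib, sum_const, Nat.card_Icc, Nat.add_sub_cancel, nsmul_one]
    push_cast
    field_simp
  have hnorm : ‖∑ l ∈ Icc 1 n, (z l - 1)‖ ≤ n * ε := by
    simpa using norm_sum_le_of_le (Icc 1 n) hz
  rw [hsum, norm_mul, Complex.norm_real, Real.norm_of_nonneg (by positivity)]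
  calc 1 / ((n : ℝ) * (n + 1)) * ‖∑ l ∈ Icc 1 n, (z l - 1)‖
      ≤ 1 / ((n : ℝ) * (n + 1)) * (n * ε) := by gcongr
    _ = ε / (n + 1) := by field_simp

lemma abs_sum_Icc_inv_succ_sub_log_le {m N : ℕ} (hm : 1 ≤ m) (hmN : m ≤ N) :
    |∑ n ∈ Icc m N, 1 / ((n : ℝ) + 1) - (log N - log m)| ≤ 2 := by
  have hsum : ∑ n ∈ Icc m N, 1 / ((n : ℝ) + 1) = harmonic (N + 1) - harmonic m := by
    rw [← Finset.Ico_add_one_right_eq_Icc, sum_Ico_eq_sub _ (by omega)]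
    simp [harmonic]
  have hm' : (1 : ℝ) ≤ m := by exact_mod_cast hm
  have hN' : (m : ℝ) ≤ N := by exact_mod_cast hmN
  have hHN_ge := log_add_one_le_harmonic (N + 1)
  have hHN_le := harmonic_le_one_add_log N
  have hHm_ge := log_add_one_le_harmonic m
  have hHm_le := harmonic_le_one_add_log m
  have hlogN : log N ≤ log ((N + 1 : ℕ) + 1 : ℕ) :=
    log_le_log (by linarith) (by push_cast; linarith)
  have hlogm : log m ≤ log (m + 1 : ℕ) := log_le_log (by linarith) (by push_cast; linarith)
  have hinv : ((N : ℝ) + 1)⁻¹ ≤ 1 := inv_le_one_of_one_le₀ (by linarith)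
  have hH_succ : (harmonic (N + 1) : ℝ) = harmonic N + ((N : ℝ) + 1)⁻¹ := by
    rw [harmonic_succ]; push_cast; rfl
  rw [hsum, abs_le]
  constructor <;> linarith

lemma norm_sum_sub_sum_inv_succ_le {k : ℕ} (hk : 1 ≤ k) (β : ℝ) {m N : ℕ} (hm : 1 ≤ m)
    (hmN : m ≤ N) :
    ‖∑ n ∈ Icc m N, 1 / ((n : ℂ) * (n + 1)) * ∑ l ∈ Icc 1 n, e ((l : ℝ) ^ k * β)
      - ∑ n ∈ Icc m N, 1 / ((n : ℂ) + 1)‖ ≤ 2 * π * N ^ k * |β| := by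
  have hterm : ∀ n ∈ Icc m N, ‖1 / ((n : ℂ) * (n + 1)) * ∑ l ∈ Icc 1 n, e ((l : ℝ) ^ k * β)
      - 1 / ((n : ℂ) + 1)‖ ≤ 2 * π * |β| * ((N : ℝ) ^ k / N) := by
    intro n hn
    obtain ⟨hmn, hnN⟩ := mem_Icc.1 hn
    have hn0 : (0 : ℝ) < n := by exact_mod_cast (by omega : 0 < n)
    have hbound : ∀ l ∈ Icc 1 n, ‖e ((l : ℝ) ^ k * β) - 1‖ ≤ 2 * π * |β| * n ^ k := by
      intro l hl
      have hln : (l : ℝ) ≤ n := by exact_mod_cast (mem_Icc.1 hl).2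
      calc _ ≤ 2 * π * |(l : ℝ) ^ k * β| := norm_e_sub_one_le _
        _ ≤ 2 * π * |β| * n ^ k := by
          rw [abs_mul, abs_pow, Nat.abs_cast, mul_comm _ |β|, ← mul_assoc]; gcongr
    calc _ ≤ 2 * π * |β| * n ^ k / (n + 1) :=
          norm_div_mul_succ_mul_sum_sub_inv_succ_le (by omega) _ hbound
      _ ≤ 2 * π * |β| * ((n : ℝ) ^ k / n) := by
          rw [mul_div_assoc]; gcongr; linarith
      _ ≤ 2 * π * |β| * ((N : ℝ) ^ k / N) := by
          gcongr 2 * π * |β| * ?_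
          exact pow_div_self_le_pow_div_self hk hn0 (Nat.cast_le.2 hnN)
  have hN : (N : ℝ) ≠ 0 := by exact_mod_cast (by omega : N ≠ 0)
  rw [← sum_sub_distrib]
  refine (norm_sum_le_of_le _ hterm).trans ?_
  rw [sum_const, Nat.card_Icc, nsmul_eq_mul]
  calc ((N + 1 - m : ℕ) : ℝ) * (2 * π * |β| * ((N : ℝ) ^ k / N))
      ≤ N * (2 * π * |β| * ((N : ℝ) ^ k / N)) := by gcongr; omega
    _ = 2 * π * N ^ k * |β| := by field_simp

lemma norm_integral_e_pow_mul_div_sub_log_le {k : ℕ} (hk : 1 ≤ k) (β : ℝ) {a b : ℝ} (ha : 0 < a)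
    (hab : a ≤ b) :
    ‖(∫ y in a..b, e (y ^ k * β) / y) - (log b - log a : ℝ)‖ ≤ 2 * π * b ^ k * |β| := by
  have hb : 0 < b := ha.trans_le hab
  have hpos : ∀ y ∈ Set.uIcc a b, 0 < y := fun y hy => ha.trans_le (Set.uIcc_of_le hab ▸ hy).1
  have hlog : ((log b - log a : ℝ) : ℂ) = ∫ y in a..b, (1 : ℂ) / y := by
    rw [← log_div hb.ne' ha.ne', ← integral_one_div fun h => (hpos 0 h).false,
      ← intervalIntegral.integral_ofReal]
    push_cast; rfl
  have hcont : Continuous fun y : ℝ => e (y ^ k * β) := by unfold e; fun_prop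
  have hne : ∀ y ∈ Set.uIcc a b, (y : ℂ) ≠ 0 := fun y hy => by exact_mod_cast (hpos y hy).ne'
  have hint_e : IntervalIntegrable (fun y : ℝ => e (y ^ k * β) / y) MeasureTheory.volume a b :=
    (hcont.continuousOn.div Complex.continuous_ofReal.continuousOn hne).intervalIntegrable
  have hint_inv : IntervalIntegrable (fun y : ℝ => (1 : ℂ) / y) MeasureTheory.volume a b :=
    (continuousOn_const.div Complex.continuous_ofReal.continuousOn hne).intervalIntegrable
  rw [hlog, ← intervalIntegral.integral_sub hint_e hint_inv]
  have hbound : ∀ y ∈ Set.uIoc a b, ‖e (y ^ k * β) / y - 1 / y‖ ≤ 2 * π * |β| * (b ^ k / b) := by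
    intro y hy
    have hy := Set.uIoc_of_le hab ▸ hy
    have hy0 : 0 < y := ha.trans hy.1
    rw [← sub_div, norm_div, Complex.norm_real, Real.norm_of_nonneg hy0.le]
    calc ‖e (y ^ k * β) - 1‖ / y ≤ 2 * π * |y ^ k * β| / y := by gcongr; exact norm_e_sub_one_le _
      _ = 2 * π * |β| * (y ^ k / y) := by
          rw [abs_mul, abs_pow, abs_of_pos hy0]; ring
      _ ≤ 2 * π * |β| * (b ^ k / b) := by
          gcongr 2 * π * |β| * ?_
          exact pow_div_self_le_pow_div_self hk hy0 hy.2
  calc _ ≤ 2 * π * |β| * (b ^ k / b) * |b - a| :=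
        intervalIntegral.norm_integral_le_of_norm_le_const hbound
    _ ≤ 2 * π * |β| * (b ^ k / b) * b := by
        gcongr; rw [abs_of_nonneg (by linarith)]; linarith
    _ = 2 * π * b ^ k * |β| := by field_simp

lemma pow_mul_le_one_of_le_rpow_neg_inv {k : ℕ} (hk : k ≠ 0) {x a : ℝ} (hx : 0 ≤ x) (ha : 0 < a)
    (h : x ≤ a ^ (-(1 : ℝ) / k)) : x ^ k * a ≤ 1 := by
  rw [neg_div, one_div, rpow_neg ha.le, ← inv_rpow ha.le,
    le_rpow_inv_iff_of_pos hx (inv_nonneg.2 ha.le) (by positivity), rpow_natCast] at h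
  calc x ^ k * a ≤ a⁻¹ * a := by gcongr
    _ = 1 := inv_mul_cancel₀ ha.ne'

/-- For `k ≥ 2` there is `C = C(k)` such that for all `β ≠ 0` and integers
`1 ≤ m ≤ N ≤ |β|^{-1/k}`, the sum `∑_{n=m}^N (n(n+1))⁻¹ ∑_{l=1}^n e(l^k β)` differs
from `∫_m^N e(y^k β)/y dy` by at most `C`. -/
theorem sum_vs_integral (k : ℕ) (hk : 2 ≤ k) :
    ∃ C : ℝ, ∀ β : ℝ, β ≠ 0 → ∀ m N : ℕ, 1 ≤ m → m ≤ N →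
      (N : ℝ) ≤ |β| ^ (-(1 : ℝ) / k) →
      ‖(∑ n ∈ Finset.Icc m N,
            (1 : ℂ) / ((n : ℂ) * ((n : ℂ) + 1)) * ∑ l ∈ Finset.Icc 1 n, e ((l : ℝ) ^ k * β))
          - ∫ y in (m : ℝ)..(N : ℝ), e (y ^ k * β) / (y : ℂ)‖ ≤ C := by
  refine ⟨4 * π + 2, fun β hβ m N hm hmN hN => ?_⟩
  have hsmall : (N : ℝ) ^ k * |β| ≤ 1 :=
    pow_mul_le_one_of_le_rpow_neg_inv (by omega) N.cast_nonneg (abs_pos.2 hβ) hN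
  have hsum := norm_sum_sub_sum_inv_succ_le (by omega : 1 ≤ k) β hm hmN
  have hharm := abs_sum_Icc_inv_succ_sub_log_le hm hmN
  have hint := norm_integral_e_pow_mul_div_sub_log_le (by omega : 1 ≤ k) β
    (by exact_mod_cast hm : (0 : ℝ) < m) (Nat.cast_le.2 hmN)
  set S := ∑ n ∈ Icc m N, 1 / ((n : ℝ) + 1)
  set L := log N - log m
  have hS : ∑ n ∈ Icc m N, 1 / ((n : ℂ) + 1) = (S : ℂ) := by simp only [S]; push_cast; rfl
  rw [hS] at hsum
  set T := ∑ n ∈ Icc m N, 1 / ((n : ℂ) * (n + 1)) * ∑ l ∈ Icc 1 n, e ((l : ℝ) ^ k * β)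
  set I := ∫ y in (m : ℝ)..(N : ℝ), e (y ^ k * β) / (y : ℂ)
  calc ‖T - I‖ = ‖(T - S) + ((S - L : ℝ) : ℂ) - (I - L)‖ := by push_cast; ring_nf
    _ ≤ 2 * π * N ^ k * |β| + 2 + 2 * π * N ^ k * |β| := by
        have hSL : ‖((S - L : ℝ) : ℂ)‖ ≤ 2 := by rwa [Complex.norm_real, Real.norm_eq_abs]
        exact (norm_sub_le _ _).trans
          (add_le_add ((norm_add_le _ _).trans (add_le_add hsum hSL)) hint)
    _ ≤ 4 * π + 2 := by nlinarith [pi_pos]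
end
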